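/- arXiv:2003.13797 — 5 statements merged into one kernel-verified Lean document; each statement's English description precedes it below -/
import Mathlib

section
/- Let 0 = t₀ < t₁ < ... < t_p = M be a partition of [0,M] and let ψ : [0,M) → ℝ² be piecewise constant with ψ(s) = Cᵢ for s ∈ [tᵢ, tᵢ₊₁). Let τ be a transportation cost (non-decreasing, concave, τ(0)=0). Then |∫_{s₁}^{s₂} ψ ds| ≤ τ(|s₂ - s₁|) holds for all s₁, s₂ ∈ [0,M] if and only if it holds for all s₁, s₂ ∈ {t₀, ..., t_p}. -/
/-!
Write `F x = ∫ s in 0..x, ψ s`; it is affine on every cell `[tᵢ, tᵢ₊₁]`. For fixed `y`, the slack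
`x ↦ τ |y - x| - ‖F y - F x‖` is concave on every subinterval of a cell that does not contain `y`
in its interior (a concave function of an affine one minus the norm of an affine map), so there it
is bounded below by its values at the endpoints. Cutting the cells at `y`, the slack is therefore
nonnegative on `[0, M]` as soon as it is nonnegative at the grid points and at `y`, where it equals
`τ 0 ≥ 0`. Applying this with `y` a grid point, and then, by the symmetry of the constraint, with
`y` arbitrary, proves the constraint for all pairs.
-/

open MeasureTheory intervalIntegral Set

section Concavity

variable {E : Type*} [NormedAddCommGroup E] [NormedSpace ℝ E] {τ : ℝ → ℝ}

lemma ConcaveOn.comp_abs_sub (hτ : ConcaveOn ℝ (Ici 0) τ) {u v y : ℝ} (hy : v ≤ y ∨ y ≤ u) :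
    ConcaveOn ℝ (Icc u v) (fun x => τ |y - x|) := by
  obtain ⟨a, b, hab⟩ : ∃ a b : ℝ, EqOn (fun x => |y - x|) (fun x => a * x + b) (Icc u v) := by
    rcases hy with h | h
    · exact ⟨-1, y, fun x hx => by simp only [abs_of_nonneg (by linarith [hx.2] : 0 ≤ y - x)]; ring⟩
    · exact ⟨1, -y, fun x hx => by simp only [abs_of_nonpos (by linarith [hx.1] : y - x ≤ 0)]; ring⟩
  have hline : ∀ x, AffineMap.lineMap b (a + b) x = a * x + b := fun x => by
    simp [AffineMap.lineMap_apply]; ring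
  refine ((hτ.comp_affineMap (AffineMap.lineMap b (a + b))).subset (fun x hx => ?_)
    (convex_Icc u v)).congr fun x hx => ?_
  · simp [hline, ← hab hx]
  · simp [hline, hab hx]

lemma convexOn_norm_sub_smul (w c : E) : ConvexOn ℝ univ (fun x : ℝ => ‖w - x • c‖) := by
  have hline : ∀ x : ℝ, AffineMap.lineMap w (w - c) x = w - x • c := fun x => by
    simp [AffineMap.lineMap_apply]; abel
  simpa [Function.comp_def, hline] using
    (convexOn_univ_norm (E := E)).comp_affineMap (AffineMap.lineMap w (w - c))

lemma concaveOn_slack (hτ : ConcaveOn ℝ (Ici 0) τ) {F : ℝ → E} {a b : ℝ} {c : E}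
    (hF : ∀ x ∈ Icc a b, F x = F a + (x - a) • c) {u v y : ℝ} (huv : Icc u v ⊆ Icc a b)
    (hy : v ≤ y ∨ y ≤ u) :
    ConcaveOn ℝ (Icc u v) (fun x => τ |y - x| - ‖F y - F x‖) := by
  refine ((hτ.comp_abs_sub hy).sub ((convexOn_norm_sub_smul (F y - F a + a • c) c).subset
    (subset_univ _) (convex_Icc u v))).congr fun x hx => ?_
  have hFx : F y - F x = F y - F a + a • c - x • c := by rw [hF x (huv hx), sub_smul]; abel
  simp only [Pi.sub_apply, hFx]

end Concavity

lemma exists_mem_Ico_of_mem_Ico {p : ℕ} (t : Fin (p + 1) → ℝ) {x : ℝ}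
    (hx : x ∈ Ico (t 0) (t (Fin.last p))) : ∃ i : Fin p, x ∈ Ico (t i.castSucc) (t i.succ) := by
  suffices ∀ k : Fin (p + 1), x < t k → ∃ i : Fin p, x ∈ Ico (t i.castSucc) (t i.succ) from
    this _ hx.2
  intro k
  induction k using Fin.induction with
  | zero => exact fun h => absurd hx.1 (not_le.2 h)
  | succ k ih => exact fun h => (lt_or_ge x (t k.castSucc)).elim ih fun h' => ⟨k, h', h⟩

section Reduction

variable {E : Type*} [NormedAddCommGroup E] [NormedSpace ℝ E] {τ : ℝ → ℝ} {p : ℕ}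
  {t : Fin (p + 1) → ℝ} {F : ℝ → E} {C : Fin p → E}

lemma norm_sub_le_of_forall_node (hτ : ConcaveOn ℝ (Ici 0) τ)
    (hF : ∀ i : Fin p, ∀ x ∈ Icc (t i.castSucc) (t i.succ),
      F x = F (t i.castSucc) + (x - t i.castSucc) • C i)
    {y : ℝ} (hnodes : ∀ k, ‖F y - F (t k)‖ ≤ τ |y - t k|) (hτ0 : 0 ≤ τ 0)
    {x : ℝ} (hx : x ∈ Icc (t 0) (t (Fin.last p))) : ‖F y - F x‖ ≤ τ |y - x| := by
  rcases hx.2.eq_or_lt with rfl | hlt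
  · exact hnodes _
  obtain ⟨i, hi⟩ := exists_mem_Ico_of_mem_Ico t ⟨hx.1, hlt⟩
  have hnode_or_y : ∀ z, (z = y ∨ ∃ k, z = t k) → ‖F y - F z‖ ≤ τ |y - z| := by
    rintro z (rfl | ⟨k, rfl⟩)
    exacts [by simpa using hτ0, hnodes k]
  suffices ∀ u v, x ∈ Icc u v → Icc u v ⊆ Icc (t i.castSucc) (t i.succ) → (v ≤ y ∨ y ≤ u) →
      (u = y ∨ ∃ k, u = t k) → (v = y ∨ ∃ k, v = t k) → ‖F y - F x‖ ≤ τ |y - x| by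
    rcases le_total x y with hxy | hyx
    · refine this _ (min (t i.succ) y) ⟨hi.1, le_min hi.2.le hxy⟩
        (Icc_subset_Icc le_rfl (min_le_left _ _)) (.inl (min_le_right _ _)) (.inr ⟨_, rfl⟩) ?_
      rcases min_choice (t i.succ) y with h | h <;> rw [h]
      exacts [.inr ⟨_, rfl⟩, .inl rfl]
    · refine this (max (t i.castSucc) y) _ ⟨max_le hi.1 hyx, hi.2.le⟩
        (Icc_subset_Icc (le_max_left _ _) le_rfl) (.inr (le_max_right _ _)) ?_ (.inr ⟨_, rfl⟩)
      rcases max_choice (t i.castSucc) y with h | h <;> rw [h]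
      exacts [.inr ⟨_, rfl⟩, .inl rfl]
  intro u v hxuv huv hyuv hu hv
  have hmin := (concaveOn_slack hτ (hF i) huv hyuv).min_le_of_mem_Icc
    (left_mem_Icc.2 (hxuv.1.trans hxuv.2)) (right_mem_Icc.2 (hxuv.1.trans hxuv.2)) hxuv
  have := le_min (sub_nonneg.2 (hnode_or_y u hu)) (sub_nonneg.2 (hnode_or_y v hv))
  linarith

theorem norm_sub_le_of_forall_node_pairs (hτ : ConcaveOn ℝ (Ici 0) τ)
    (hF : ∀ i : Fin p, ∀ x ∈ Icc (t i.castSucc) (t i.succ),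
      F x = F (t i.castSucc) + (x - t i.castSucc) • C i)
    (hgrid : ∀ i j, ‖F (t j) - F (t i)‖ ≤ τ |t j - t i|)
    {x y : ℝ} (hx : x ∈ Icc (t 0) (t (Fin.last p))) (hy : y ∈ Icc (t 0) (t (Fin.last p))) :
    ‖F y - F x‖ ≤ τ |y - x| := by
  have hτ0 : 0 ≤ τ 0 := by simpa using hgrid 0 0
  have hcol : ∀ k, ‖F y - F (t k)‖ ≤ τ |y - t k| := fun k => by
    rw [norm_sub_rev, abs_sub_comm]
    exact norm_sub_le_of_forall_node hτ hF (fun j => hgrid j k) hτ0 hy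
  exact norm_sub_le_of_forall_node hτ hF hcol hτ0 hx

end Reduction

lemma eqOn_uIoo_of_forall_mem_Ico {α : Type*} {ψ : ℝ → α} {a b : ℝ} {c : α}
    (hψ : ∀ s ∈ Ico a b, ψ s = c) {u v : ℝ} (hu : u ∈ Icc a b) (hv : v ∈ Icc a b) :
    EqOn ψ (fun _ => c) (uIoo u v) := fun s hs =>
  hψ s ⟨(le_min hu.1 hv.1).trans hs.1.le, hs.2.trans_le (max_le hu.2 hv.2)⟩

section Integral

variable {E : Type*} [NormedAddCommGroup E] {ψ : ℝ → E}

lemma intervalIntegrable_of_forall_mem_Ico {a b : ℝ} {c : E} (hψ : ∀ s ∈ Ico a b, ψ s = c)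
    {u v : ℝ} (hu : u ∈ Icc a b) (hv : v ∈ Icc a b) : IntervalIntegrable ψ volume u v :=
  intervalIntegrable_const.congr_uIoo (eqOn_uIoo_of_forall_mem_Ico hψ hu hv).symm

lemma integral_of_forall_mem_Ico [NormedSpace ℝ E] [CompleteSpace E] {a b : ℝ} {c : E}
    (hψ : ∀ s ∈ Ico a b, ψ s = c) {u v : ℝ} (hu : u ∈ Icc a b) (hv : v ∈ Icc a b) :
    ∫ s in u..v, ψ s = (v - u) • c := by
  rw [integral_congr_uIoo (eqOn_uIoo_of_forall_mem_Ico hψ hu hv), intervalIntegral.integral_const]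

variable {p : ℕ} {t : Fin (p + 1) → ℝ} {C : Fin p → E}

lemma intervalIntegrable_of_piecewise_const (ht : Monotone t)
    (hψ : ∀ i : Fin p, ∀ s ∈ Ico (t i.castSucc) (t i.succ), ψ s = C i) {u v : ℝ}
    (hu : u ∈ Icc (t 0) (t (Fin.last p))) (hv : v ∈ Icc (t 0) (t (Fin.last p))) :
    IntervalIntegrable ψ volume u v := by
  have hfirst : ∀ k, IntervalIntegrable ψ volume (t 0) (t k) := by
    intro k
    induction k using Fin.induction with
    | zero => exact .refl
    | succ k ih =>
      have hk : t k.castSucc ≤ t k.succ := ht (Fin.castSucc_le_succ k)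
      exact ih.trans (intervalIntegrable_of_forall_mem_Ico (hψ k) (left_mem_Icc.2 hk)
        (right_mem_Icc.2 hk))
  exact (hfirst _).mono_set (uIcc_subset_uIcc (Icc_subset_uIcc hu) (Icc_subset_uIcc hv))

lemma integral_of_piecewise_const [NormedSpace ℝ E] [CompleteSpace E] (ht : Monotone t)
    (hψ : ∀ i : Fin p, ∀ s ∈ Ico (t i.castSucc) (t i.succ), ψ s = C i) (i : Fin p) {x : ℝ}
    (hx : x ∈ Icc (t i.castSucc) (t i.succ)) :
    ∫ s in t 0..x, ψ s = (∫ s in t 0..t i.castSucc, ψ s) + (x - t i.castSucc) • C i := by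
  have hrange : Icc (t i.castSucc) (t i.succ) ⊆ Icc (t 0) (t (Fin.last p)) :=
    Icc_subset_Icc (ht (Fin.zero_le _)) (ht (Fin.le_last _))
  have hleft := left_mem_Icc.2 (hx.1.trans hx.2)
  have hi := hrange hleft
  have h0 := left_mem_Icc.2 (ht (Fin.zero_le (Fin.last p)))
  rw [← integral_of_forall_mem_Ico (hψ i) hleft hx,
    integral_add_adjacent_intervals (intervalIntegrable_of_piecewise_const ht hψ h0 hi)
      (intervalIntegrable_of_piecewise_const ht hψ hi (hrange hx))]

end Integral

theorem constraint_reduction_pw_constant_general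
    (M : ℝ) (p : ℕ) (t : Fin (p + 1) → ℝ)
    (ht : StrictMono t) (ht0 : t 0 = 0) (htp : t (Fin.last p) = M)
    (ψ : ℝ → EuclideanSpace ℝ (Fin 2)) (C : Fin p → EuclideanSpace ℝ (Fin 2))
    (hψ : ∀ i : Fin p, ∀ s ∈ Set.Ico (t i.castSucc) (t i.succ), ψ s = C i)
    (τ : ℝ → ℝ)
    (hconc : ConcaveOn ℝ (Set.Ici 0) τ) :
    (∀ s₁ s₂ : ℝ, s₁ ∈ Set.Icc 0 M → s₂ ∈ Set.Icc 0 M →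
        ‖∫ s in s₁..s₂, ψ s‖ ≤ τ |s₂ - s₁|) ↔
    (∀ i j : Fin (p + 1), ‖∫ s in t i..t j, ψ s‖ ≤ τ |t j - t i|) := by
  rw [← ht0, ← htp]
  have hnode : ∀ k, t k ∈ Icc (t 0) (t (Fin.last p)) := fun k =>
    ⟨ht.monotone (Fin.zero_le k), ht.monotone (Fin.le_last k)⟩
  refine ⟨fun h i j => h _ _ (hnode i) (hnode j), fun hgrid s₁ s₂ hs₁ hs₂ => ?_⟩
  set F := fun x => ∫ s in t 0..x, ψ s
  have hdiff : ∀ x ∈ Icc (t 0) (t (Fin.last p)), ∀ y ∈ Icc (t 0) (t (Fin.last p)),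
      ∫ s in x..y, ψ s = F y - F x := fun x hx y hy =>
    (integral_interval_sub_left
      (intervalIntegrable_of_piecewise_const ht.monotone hψ (hnode 0) hy)
      (intervalIntegrable_of_piecewise_const ht.monotone hψ (hnode 0) hx)).symm
  rw [hdiff _ hs₁ _ hs₂]
  refine norm_sub_le_of_forall_node_pairs hconc
    (fun i x hx => integral_of_piecewise_const ht.monotone hψ i hx) (fun i j => ?_) hs₁ hs₂
  rw [← hdiff _ (hnode i) _ (hnode j)]
  exact hgrid i j

/-- Constraint reduction for functions piecewise constant in the lifted direction. -/
theorem constraint_reduction_pw_constant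
    (M : ℝ) (p : ℕ) (hp : 0 < p) (t : Fin (p + 1) → ℝ)
    (ht : StrictMono t) (ht0 : t 0 = 0) (htp : t (Fin.last p) = M)
    (ψ : ℝ → EuclideanSpace ℝ (Fin 2)) (C : Fin p → EuclideanSpace ℝ (Fin 2))
    (hψ : ∀ i : Fin p, ∀ s ∈ Set.Ico (t i.castSucc) (t i.succ), ψ s = C i)
    (τ : ℝ → ℝ) (hmono : MonotoneOn τ (Set.Ici 0))
    (hconc : ConcaveOn ℝ (Set.Ici 0) τ)
    (hlsc : LowerSemicontinuousOn τ (Set.Ici 0))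
    (hτ0 : τ 0 = 0) (hτnn : ∀ m, 0 ≤ m → 0 ≤ τ m) :
    (∀ s₁ s₂ : ℝ, s₁ ∈ Set.Icc 0 M → s₂ ∈ Set.Icc 0 M →
        ‖∫ s in s₁..s₂, ψ s‖ ≤ τ |s₂ - s₁|) ↔
    (∀ i j : Fin (p + 1), ‖∫ s in t i..t j, ψ s‖ ≤ τ |t j - t i|) :=
  constraint_reduction_pw_constant_general M p t ht ht0 htp ψ C hψ τ hconc
end

section
/- Let τ be a transportation cost, m₁, m₂ > 0, M = m₁ + m₂, and e₁, e₂ unit vectors satisfying |τ(m₁)e₁ + τ(m₂)e₂| ≤ τ(m₁+m₂). Define ψ : [0,M] → ℝ² by ψ(s) = (τ(m₂)/m₂)e₂ for 0 ≤ s ≤ m₂ and ψ(s) = (τ(m₁)/m₁)e₁ for m₂ < s ≤ M. Then for all 0 ≤ s₁ ≤ s₂ ≤ M one has |∫_{s₁}^{s₂} ψ(s) ds| ≤ τ(s₂ - s₁). -/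
/-!
Over `[s₁, s₂]` the field `ψ` integrates to `a • τ m₁ • e₁ + b • τ m₂ • e₂`, where `a, b ∈ [0, 1]`
are the fractions of `(m₂, M]` and `[0, m₂]` covered, so that `a m₁ + b m₂ = s₂ - s₁`. Splitting
off `α = min a b` copies of `τ m₁ • e₁ + τ m₂ • e₂`, whose norm is at most `τ (m₁ + m₂)`, bounds the
norm by `α τ (m₁ + m₂) + (a - α) τ m₁ + (b - α) τ m₂`. These weights have total mass
`max a b ≤ 1`, so concavity and `τ 0 = 0` bound this by `τ (a m₁ + b m₂)`.
-/

open Set MeasureTheory intervalIntegral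

theorem ConcaveOn.sum_mul_le_map_sum_of_sum_le_one {ι : Type*} {f : ℝ → ℝ}
    (hf : ConcaveOn ℝ (Ici 0) f) (hf0 : 0 ≤ f 0) {t : Finset ι} {w p : ι → ℝ}
    (hw : ∀ i ∈ t, 0 ≤ w i) (hw₁ : ∑ i ∈ t, w i ≤ 1) (hp : ∀ i ∈ t, 0 ≤ p i) :
    ∑ i ∈ t, w i * f (p i) ≤ f (∑ i ∈ t, w i * p i) := by
  -- the missing mass `1 - ∑ w` is put on the point `0`
  have := hf.le_map_sum (t := t.insertNone) (w := fun o => o.elim (1 - ∑ i ∈ t, w i) w)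
    (p := fun o => o.elim 0 p) ?_ ?_ ?_
  · simp only [Finset.sum_insertNone, Option.elim, smul_eq_mul, mul_zero, zero_add] at this
    nlinarith [mul_nonneg (sub_nonneg.2 hw₁) hf0]
  · rintro (_ | i) hi
    · simpa using hw₁
    · exact hw i (by simpa using hi)
  · simp [Finset.sum_insertNone]
  · rintro (_ | i) hi
    · exact self_mem_Ici
    · exact hp i (by simpa using hi)

section

variable {E : Type*} [NormedAddCommGroup E] {f : ℝ → E} {a b c : ℝ} {u v : E}

theorem intervalIntegrable_of_eqOn_Ioc (hab : a ≤ b) (hf : EqOn f (fun _ => u) (Ioc a b)) :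
    IntervalIntegrable f volume a b :=
  (intervalIntegrable_congr (by rwa [uIoc_of_le hab])).2 intervalIntegrable_const

variable [NormedSpace ℝ E] [CompleteSpace E]

theorem intervalIntegral.integral_eq_sub_smul_of_eqOn_Ioc (hab : a ≤ b)
    (hf : EqOn f (fun _ => u) (Ioc a b)) : ∫ x in a..b, f x = (b - a) • u := by
  rw [intervalIntegral.integral_of_le hab, setIntegral_congr_fun measurableSet_Ioc hf,
    setIntegral_const, Real.volume_real_Ioc_of_le hab]

theorem intervalIntegral.integral_eq_of_eqOn_Ioc_of_eqOn_Ioc (hac : a ≤ c) (hcb : c ≤ b)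
    (hu : EqOn f (fun _ => u) (Ioc a c)) (hv : EqOn f (fun _ => v) (Ioc c b)) :
    ∫ x in a..b, f x = (c - a) • u + (b - c) • v := by
  rw [← intervalIntegral.integral_add_adjacent_intervals (intervalIntegrable_of_eqOn_Ioc hac hu)
    (intervalIntegrable_of_eqOn_Ioc hcb hv), integral_eq_sub_smul_of_eqOn_Ioc hac hu,
    integral_eq_sub_smul_of_eqOn_Ioc hcb hv]

end

theorem norm_smul_smul_add_smul_smul_le_of_concaveOn {E : Type*} [SeminormedAddCommGroup E]
    [NormedSpace ℝ E] {τ : ℝ → ℝ} (hconc : ConcaveOn ℝ (Ici 0) τ) (hτ0 : 0 ≤ τ 0)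
    {m₁ m₂ : ℝ} (hm₁ : 0 ≤ m₁) (hm₂ : 0 ≤ m₂) (hτ₁ : 0 ≤ τ m₁) (hτ₂ : 0 ≤ τ m₂)
    {e₁ e₂ : E} (he₁ : ‖e₁‖ ≤ 1) (he₂ : ‖e₂‖ ≤ 1)
    (hangle : ‖τ m₁ • e₁ + τ m₂ • e₂‖ ≤ τ (m₁ + m₂))
    {a b : ℝ} (ha₀ : 0 ≤ a) (ha₁ : a ≤ 1) (hb₀ : 0 ≤ b) (hb₁ : b ≤ 1) :
    ‖a • τ m₁ • e₁ + b • τ m₂ • e₂‖ ≤ τ (a * m₁ + b * m₂) := by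
  set α := min a b
  have hα₀ : 0 ≤ α := le_min ha₀ hb₀
  have hαa : α ≤ a := min_le_left a b
  have hαb : α ≤ b := min_le_right a b
  have hmass : α + (a - α) + (b - α) ≤ 1 := by
    have := min_add_max a b
    linarith [max_le ha₁ hb₁]
  have hterm : ∀ {c t : ℝ} {e : E}, 0 ≤ c → 0 ≤ t → ‖e‖ ≤ 1 → ‖c • t • e‖ ≤ c * t :=
    fun hc ht he => by
      rw [norm_smul, norm_smul, Real.norm_of_nonneg hc, Real.norm_of_nonneg ht]
      exact mul_le_mul_of_nonneg_left (mul_le_of_le_one_right ht he) hc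
  have hjensen := hconc.sum_mul_le_map_sum_of_sum_le_one hτ0 (t := Finset.univ)
    (w := ![α, a - α, b - α]) (p := ![m₁ + m₂, m₁, m₂])
    (by simp [Fin.forall_fin_succ, hα₀, hαa, hαb]) (by simpa [Fin.sum_univ_three] using hmass)
    (by simp [Fin.forall_fin_succ, hm₁, hm₂]; positivity)
  simp only [Fin.sum_univ_three, Matrix.cons_val] at hjensen
  calc ‖a • τ m₁ • e₁ + b • τ m₂ • e₂‖
      = ‖α • (τ m₁ • e₁ + τ m₂ • e₂) + ((a - α) • τ m₁ • e₁ + (b - α) • τ m₂ • e₂)‖ := by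
        congr 1; module
    _ ≤ α * τ (m₁ + m₂) + ((a - α) * τ m₁ + (b - α) * τ m₂) := by
        refine (norm_add_le _ _).trans (add_le_add ?_ ((norm_add_le _ _).trans (add_le_add
          (hterm (sub_nonneg.2 hαa) hτ₁ he₁) (hterm (sub_nonneg.2 hαb) hτ₂ he₂))))
        rw [norm_smul, Real.norm_of_nonneg hα₀]
        exact mul_le_mul_of_nonneg_left hangle hα₀
    _ ≤ τ (α * (m₁ + m₂) + (a - α) * m₁ + (b - α) * m₂) := by linarith
    _ = τ (a * m₁ + b * m₂) := by ring_nf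

/-- The vector field calibrating a triple junction satisfies the lifted
integral constraint between all levels. -/
theorem triple_junction_calibration_constraint
    (τ : ℝ → ℝ) (hmono : MonotoneOn τ (Set.Ici 0))
    (hconc : ConcaveOn ℝ (Set.Ici 0) τ) (hτ0 : τ 0 = 0)
    (m₁ m₂ M : ℝ) (hm₁ : 0 < m₁) (hm₂ : 0 < m₂) (hM : M = m₁ + m₂)
    (e₁ e₂ : EuclideanSpace ℝ (Fin 2)) (he₁ : ‖e₁‖ = 1) (he₂ : ‖e₂‖ = 1)
    (hangle : ‖τ m₁ • e₁ + τ m₂ • e₂‖ ≤ τ (m₁ + m₂))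
    (ψ : ℝ → EuclideanSpace ℝ (Fin 2))
    (hψ₁ : ∀ s ∈ Set.Icc (0 : ℝ) m₂, ψ s = (τ m₂ / m₂) • e₂)
    (hψ₂ : ∀ s ∈ Set.Ioc m₂ M, ψ s = (τ m₁ / m₁) • e₁) :
    ∀ s₁ s₂ : ℝ, 0 ≤ s₁ → s₁ ≤ s₂ → s₂ ≤ M →
      ‖∫ s in s₁..s₂, ψ s‖ ≤ τ (s₂ - s₁) := by
  intro s₁ s₂ h₀ h₁₂ h₂M
  have hτ_nonneg : ∀ {x : ℝ}, 0 ≤ x → 0 ≤ τ x := fun hx => hτ0 ▸ hmono self_mem_Ici hx hx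
  -- `[s₁, c]` and `[c, s₂]` are the parts of `[s₁, s₂]` below and above `m₂`
  set c := max s₁ (min s₂ m₂)
  have hc₁ : 0 ≤ c - s₁ ∧ c - s₁ ≤ m₂ := by grind
  have hc₂ : 0 ≤ s₂ - c ∧ s₂ - c ≤ m₁ := by grind
  have hint : ∫ s in s₁..s₂, ψ s = (c - s₁) • (τ m₂ / m₂) • e₂ + (s₂ - c) • (τ m₁ / m₁) • e₁ :=
    integral_eq_of_eqOn_Ioc_of_eqOn_Ioc (by linarith) (by linarith)
      (fun x hx => hψ₁ x (by grind)) (fun x hx => hψ₂ x (by grind))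
  calc ‖∫ s in s₁..s₂, ψ s‖
      = ‖((s₂ - c) / m₁) • τ m₁ • e₁ + ((c - s₁) / m₂) • τ m₂ • e₂‖ := by
        rw [hint, add_comm]; simp only [smul_smul]; congr 3 <;> ring
    _ ≤ τ ((s₂ - c) / m₁ * m₁ + (c - s₁) / m₂ * m₂) :=
        norm_smul_smul_add_smul_smul_le_of_concaveOn hconc hτ0.ge hm₁.le hm₂.le
          (hτ_nonneg hm₁.le) (hτ_nonneg hm₂.le) he₁.le he₂.le hangle
          (div_nonneg hc₂.1 hm₁.le) ((div_le_one hm₁).2 hc₂.2)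
          (div_nonneg hc₁.1 hm₂.le) ((div_le_one hm₂).2 hc₁.2)
    _ = τ (s₂ - s₁) := by congr 1; field_simp; ring
end

section
/- The function m ↦ sqrt(β² - m²)·arsinh(m/sqrt(β² - m²)) is strictly concave on (0, β) for every β > 0. -/
/-!
With `s = √(β² - m²)` one has `√(1 + (m/s)²) = β/s`, so `arsinh (m/s)` has derivative `β/s²`.
Hence the function has derivative `(β - m · arsinh (m/s)) / s` and second derivative
`-β² · arsinh (m/s) / s³`, which is negative for `0 < m < β` because `arsinh` is positive
on positive arguments.
-/

open Real Set

theorem strictConcaveOn_of_hasDerivAt2_neg {D : Set ℝ} (hD : Convex ℝ D) (hD' : IsOpen D)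
    {f f' f'' : ℝ → ℝ} (hf : ∀ x ∈ D, HasDerivAt f (f' x) x)
    (hf' : ∀ x ∈ D, HasDerivAt f' (f'' x) x) (hf'' : ∀ x ∈ D, f'' x < 0) :
    StrictConcaveOn ℝ D f := by
  refine strictConcaveOn_of_deriv2_neg' hD (fun x hx => (hf x hx).continuousAt.continuousWithinAt)
    fun x hx => ?_
  have hderiv : deriv f =ᶠ[nhds x] f' :=
    Filter.eventually_of_mem (hD'.mem_nhds hx) fun y hy => (hf y hy).deriv
  rw [Function.iterate_succ_apply, Function.iterate_one, hderiv.deriv_eq, (hf' x hx).deriv]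
  exact hf'' x hx

lemma sq_sub_sq_pos_of_abs_lt {β m : ℝ} (hm : |m| < β) : 0 < β ^ 2 - m ^ 2 := by
  rw [sub_pos, sq_lt_sq, abs_of_pos ((abs_nonneg m).trans_lt hm)]
  exact hm

lemma hasDerivAt_sqrt_sq_sub_sq {β m : ℝ} (hm : |m| < β) :
    HasDerivAt (fun x => √(β ^ 2 - x ^ 2)) (-m / √(β ^ 2 - m ^ 2)) m := by
  have hpos := sq_sub_sq_pos_of_abs_lt hm
  convert ((hasDerivAt_pow 2 m).const_sub (β ^ 2)).sqrt hpos.ne' using 1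
  field_simp
  ring

lemma hasDerivAt_div_sqrt_sq_sub_sq {β m : ℝ} (hm : |m| < β) :
    HasDerivAt (fun x => x / √(β ^ 2 - x ^ 2)) (β ^ 2 / √(β ^ 2 - m ^ 2) ^ 3) m := by
  have hpos := sq_sub_sq_pos_of_abs_lt hm
  have hs : 0 < √(β ^ 2 - m ^ 2) := sqrt_pos.2 hpos
  refine ((hasDerivAt_id' m).div (hasDerivAt_sqrt_sq_sub_sq hm) hs.ne').congr_deriv ?_
  have hs2 : √(β ^ 2 - m ^ 2) ^ 2 = β ^ 2 - m ^ 2 := sq_sqrt hpos.le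
  field_simp
  linear_combination hs2

lemma sqrt_one_add_div_sqrt_sq_sub_sq_sq {β m : ℝ} (hm : |m| < β) :
    √(1 + (m / √(β ^ 2 - m ^ 2)) ^ 2) = β / √(β ^ 2 - m ^ 2) := by
  have hpos := sq_sub_sq_pos_of_abs_lt hm
  have hs : 0 < √(β ^ 2 - m ^ 2) := sqrt_pos.2 hpos
  have hβ : 0 ≤ β := (abs_nonneg m).trans hm.le
  rw [sqrt_eq_iff_eq_sq (by positivity) (by positivity), div_pow, div_pow, sq_sqrt hpos.le]
  field_simp
  ring

lemma hasDerivAt_arsinh_div_sqrt_sq_sub_sq {β m : ℝ} (hm : |m| < β) :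
    HasDerivAt (fun x => arsinh (x / √(β ^ 2 - x ^ 2))) (β / √(β ^ 2 - m ^ 2) ^ 2) m := by
  have hs : 0 < √(β ^ 2 - m ^ 2) := sqrt_pos.2 (sq_sub_sq_pos_of_abs_lt hm)
  refine (hasDerivAt_div_sqrt_sq_sub_sq hm).arsinh.congr_deriv ?_
  rw [sqrt_one_add_div_sqrt_sq_sub_sq_sq hm, smul_eq_mul]
  field_simp

noncomputable def diffuseFluxBound (β m : ℝ) : ℝ :=
  √(β ^ 2 - m ^ 2) * arsinh (m / √(β ^ 2 - m ^ 2))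

noncomputable def diffuseFluxBoundDeriv (β m : ℝ) : ℝ :=
  (β - m * arsinh (m / √(β ^ 2 - m ^ 2))) / √(β ^ 2 - m ^ 2)

lemma hasDerivAt_diffuseFluxBound {β m : ℝ} (hm : |m| < β) :
    HasDerivAt (diffuseFluxBound β) (diffuseFluxBoundDeriv β m) m := by
  have hpos := sq_sub_sq_pos_of_abs_lt hm
  have hs : 0 < √(β ^ 2 - m ^ 2) := sqrt_pos.2 hpos
  refine ((hasDerivAt_sqrt_sq_sub_sq hm).mul
    (hasDerivAt_arsinh_div_sqrt_sq_sub_sq hm)).congr_deriv ?_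
  rw [diffuseFluxBoundDeriv]
  field_simp
  ring

lemma hasDerivAt_diffuseFluxBoundDeriv {β m : ℝ} (hm : |m| < β) :
    HasDerivAt (diffuseFluxBoundDeriv β)
      (-(β ^ 2 * arsinh (m / √(β ^ 2 - m ^ 2))) / √(β ^ 2 - m ^ 2) ^ 3) m := by
  have hpos := sq_sub_sq_pos_of_abs_lt hm
  have hs : 0 < √(β ^ 2 - m ^ 2) := sqrt_pos.2 hpos
  have hs2 : √(β ^ 2 - m ^ 2) ^ 2 = β ^ 2 - m ^ 2 := sq_sqrt hpos.le
  have hnum : HasDerivAt (fun x => β - x * arsinh (x / √(β ^ 2 - x ^ 2)))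
      (-(arsinh (m / √(β ^ 2 - m ^ 2)) + m * (β / √(β ^ 2 - m ^ 2) ^ 2))) m :=
    (((hasDerivAt_id' m).mul (hasDerivAt_arsinh_div_sqrt_sq_sub_sq hm)).const_sub β).congr_deriv
      (by ring)
  refine (hnum.div (hasDerivAt_sqrt_sq_sub_sq hm) hs.ne').congr_deriv ?_
  field_simp
  linear_combination (-arsinh (m / √(β ^ 2 - m ^ 2))) * hs2

theorem diffuse_flux_bound_strictConcave_general (β : ℝ) :
    StrictConcaveOn ℝ (Set.Ioo 0 β)
      (fun m => Real.sqrt (β ^ 2 - m ^ 2)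
        * Real.arsinh (m / Real.sqrt (β ^ 2 - m ^ 2))) := by
  have habs {m : ℝ} (hm : m ∈ Ioo 0 β) : |m| < β := (abs_of_pos hm.1).trans_lt hm.2
  refine strictConcaveOn_of_hasDerivAt2_neg (convex_Ioo 0 β) isOpen_Ioo
    (fun m hm => hasDerivAt_diffuseFluxBound (habs hm))
    (fun m hm => hasDerivAt_diffuseFluxBoundDeriv (habs hm)) fun m hm => ?_
  have hs : 0 < √(β ^ 2 - m ^ 2) := sqrt_pos.2 (sq_sub_sq_pos_of_abs_lt (habs hm))
  have harsinh : 0 < arsinh (m / √(β ^ 2 - m ^ 2)) := arsinh_pos_iff.2 (div_pos hm.1 hs)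
  have hβ : 0 < β ^ 2 := pow_pos (hm.1.trans hm.2) 2
  exact div_neg_of_neg_of_pos (neg_neg_of_pos (mul_pos hβ harsinh)) (pow_pos hs 3)

/-- The lower bound `m ↦ √(β²-m²)·arsinh(m/√(β²-m²))` is strictly concave on
`(0, β)`. -/
theorem diffuse_flux_bound_strictConcave (β : ℝ) (hβ : 0 < β) :
    StrictConcaveOn ℝ (Set.Ioo 0 β)
      (fun m => Real.sqrt (β ^ 2 - m ^ 2)
        * Real.arsinh (m / Real.sqrt (β ^ 2 - m ^ 2))) :=
  diffuse_flux_bound_strictConcave_general β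
end

section
/- Let τ be a transportation cost, let m₁, m₂ > 0, s₁ ∈ [0, m₂], s₂ ∈ [m₂, m₁+m₂], and set α = min{(m₂-s₁)/m₂, (s₂-m₂)/m₁}. Then the coefficients α, (m₂-s₁)/m₂ - α, (s₂-m₂)/m₁ - α, and 1 + α - (m₂-s₁)/m₂ - (s₂-m₂)/m₁ are all non-negative and sum to 1, and α(m₁+m₂) + ((m₂-s₁)/m₂ - α)m₂ + ((s₂-m₂)/m₁ - α)m₁ + (1 + α - (m₂-s₁)/m₂ - (s₂-m₂)/m₁)·0 = s₂ - s₁. Consequently, by concavity of τ, α·τ(m₁+m₂) + ((m₂-s₁)/m₂ - α)τ(m₂) + ((s₂-m₂)/m₁ - α)τ(m₁) ≤ τ(s₂ - s₁). -/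
/-- The Jensen-inequality computation in the triple-junction calibration:
the four coefficients are nonnegative, sum to one, combine the masses to
`s₂ - s₁`, and concavity of `τ` yields the key estimate. -/
theorem triple_junction_jensen
    (τ : ℝ → ℝ) (hconc : ConcaveOn ℝ (Set.Ici 0) τ) (hτ0 : τ 0 = 0)
    (m₁ m₂ s₁ s₂ : ℝ) (hm₁ : 0 < m₁) (hm₂ : 0 < m₂)
    (hs₁ : s₁ ∈ Set.Icc 0 m₂) (hs₂ : s₂ ∈ Set.Icc m₂ (m₁ + m₂)) :
    let α := min ((m₂ - s₁) / m₂) ((s₂ - m₂) / m₁)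
    0 ≤ α ∧
    0 ≤ (m₂ - s₁) / m₂ - α ∧
    0 ≤ (s₂ - m₂) / m₁ - α ∧
    0 ≤ 1 + α - (m₂ - s₁) / m₂ - (s₂ - m₂) / m₁ ∧
    α + ((m₂ - s₁) / m₂ - α) + ((s₂ - m₂) / m₁ - α)
      + (1 + α - (m₂ - s₁) / m₂ - (s₂ - m₂) / m₁) = 1 ∧
    α * (m₁ + m₂) + ((m₂ - s₁) / m₂ - α) * m₂ + ((s₂ - m₂) / m₁ - α) * m₁
      + (1 + α - (m₂ - s₁) / m₂ - (s₂ - m₂) / m₁) * 0 = s₂ - s₁ ∧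
    α * τ (m₁ + m₂) + ((m₂ - s₁) / m₂ - α) * τ m₂ + ((s₂ - m₂) / m₁ - α) * τ m₁
      ≤ τ (s₂ - s₁) := by
  obtain ⟨hs₁0, hs₁m⟩ := hs₁
  obtain ⟨hs₂m, hs₂M⟩ := hs₂
  intro α
  set a := (m₂ - s₁) / m₂ with ha
  set b := (s₂ - m₂) / m₁ with hb
  have ha0 : 0 ≤ a := div_nonneg (by linarith) hm₂.le
  have hb0 : 0 ≤ b := div_nonneg (by linarith) hm₁.le
  have ha1 : a ≤ 1 := by rw [ha, div_le_one hm₂]; linarith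
  have hb1 : b ≤ 1 := by rw [hb, div_le_one hm₁]; linarith
  have hα0 : 0 ≤ α := le_min ha0 hb0
  have hαa : α ≤ a := min_le_left _ _
  have hαb : α ≤ b := min_le_right _ _
  have h4 : 0 ≤ 1 + α - a - b := by
    rcases min_le_iff.mp (le_of_eq (rfl : α = min a b)) with h | h
    · rcases le_total a b with hab | hab
      · have : α = a := min_eq_left hab
        linarith
      · have : α = b := min_eq_right hab
        linarith
    · linarith
  have hcomb : α * (m₁ + m₂) + (a - α) * m₂ + (b - α) * m₁
      + (1 + α - a - b) * 0 = s₂ - s₁ := by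
    have h1 : a * m₂ = m₂ - s₁ := by
      rw [ha]; field_simp
    have h2 : b * m₁ = s₂ - m₂ := by
      rw [hb]; field_simp
    linear_combination h1 + h2
  refine ⟨hα0, by linarith, by linarith, h4, by ring, hcomb, ?_⟩
  have key := hconc.le_map_sum (t := (Finset.univ : Finset (Fin 4)))
    (w := ![α, a - α, b - α, 1 + α - a - b]) (p := ![m₁ + m₂, m₂, m₁, 0])
    (fun i _ => by fin_cases i <;> simp <;> linarith)
    (by simp [Fin.sum_univ_four]; ring)
    (fun i _ => by fin_cases i <;> simp [Set.mem_Ici] <;> linarith)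
  simp only [Fin.sum_univ_four, Matrix.cons_val_zero, Matrix.cons_val_one, Matrix.head_cons,
    smul_eq_mul, Matrix.cons_val_two, Matrix.tail_cons, Matrix.cons_val_three] at key
  rw [hτ0] at key
  calc α * τ (m₁ + m₂) + (a - α) * τ m₂ + (b - α) * τ m₁
      = α * τ (m₁ + m₂) + (a - α) * τ m₂ + (b - α) * τ m₁ + (1 + α - a - b) * 0 := by ring
    _ ≤ τ (α * (m₁ + m₂) + (a - α) * m₂ + (b - α) * m₁ + (1 + α - a - b) * 0) := key
    _ = τ (s₂ - s₁) := by rw [show α * (m₁ + m₂) + (a - α) * m₂ + (b - α) * m₁ + (1 + α - a - b) * 0 = s₂ - s₁ by linarith [hcomb]]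
end

section
/- Let A : X → Y be a bounded linear operator between normed spaces, F : X → (-∞,∞] the convex indicator function of a nonempty closed convex set K ⊂ X, and G : Y → ℝ a continuous convex function. Then sup_{φ∈X} (-F(φ) - G(Aφ)) = min_{w∈Y'} (F*(A*w) + G*(-w)), i.e., strong Fenchel–Rockafellar duality holds and the dual minimum is attained whenever the common value is finite. -/
/-!
Weak duality is the Fenchel–Young inequality `F φ + F* (A* w) ≥ ⟪w, A φ⟫ ≥ -G (A φ) - G* (-w)`.
For attainment, if `s` is the finite primal value then `G ≥ -s` on the convex set `A K`.
Separating the open strict epigraph of `G` from `A K × (-∞, -s]` by Hahn–Banach gives a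
continuous affine minorant `w + c` of `G` that is still `≥ -s` on `A K`; this bounds
`F* (A* (-w)) ≤ c + s` and `G* w ≤ -c`, so `-w` is a dual optimum.
-/

open NormedSpace Classical

open Set

theorem eq_sInf_of_forall_le_of_exists_le {α ι : Type*} [CompleteLattice α] {s : α} {d : ι → α}
    (hle : ∀ i, s ≤ d i) (hattain : s ≠ ⊤ → ∃ i, d i ≤ s) :
    s = sInf {r | ∃ i, r = d i} ∧ (s ≠ ⊤ → ∃ i, d i = s) := by
  have hinf : s = sInf {r | ∃ i, r = d i} := by
    refine le_antisymm (le_sInf ?_) ?_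
    · rintro _ ⟨i, rfl⟩
      exact hle i
    · rcases eq_or_ne s ⊤ with hs | hs
      · exact hs ▸ le_top
      · obtain ⟨i, hi⟩ := hattain hs
        exact sInf_le_of_le ⟨i, rfl⟩ hi
  exact ⟨hinf, fun hs => (hattain hs).imp fun i hi => le_antisymm hi (hle i)⟩

theorem ConvexOn.exists_affine_minorant_ge_on {Y : Type*} [TopologicalSpace Y] [AddCommGroup Y]
    [Module ℝ Y] [IsTopologicalAddGroup Y] [ContinuousSMul ℝ Y]
    {G : Y → ℝ} (hGconv : ConvexOn ℝ univ G) (hGcont : Continuous G)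
    {D : Set Y} (hDne : D.Nonempty) (hDconv : Convex ℝ D) {M : ℝ} (hM : ∀ y ∈ D, M ≤ G y) :
    ∃ (w : Y →L[ℝ] ℝ) (c : ℝ), (∀ y, w y + c ≤ G y) ∧ ∀ y ∈ D, M ≤ w y + c := by
  obtain ⟨d, hd⟩ := hDne
  have hEconv : Convex ℝ {p : Y × ℝ | G p.1 < p.2} := by
    simpa only [mem_univ, true_and] using hGconv.convex_strict_epigraph
  have hEopen : IsOpen {p : Y × ℝ | G p.1 < p.2} :=
    isOpen_lt (hGcont.comp continuous_fst) continuous_snd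
  have hdisj : Disjoint {p : Y × ℝ | G p.1 < p.2} (D ×ˢ Iic M) := by
    rw [Set.disjoint_left]
    rintro ⟨y, t⟩ (hlt : G y < t) ⟨hy, ht : t ≤ M⟩
    linarith [hM y hy]
  obtain ⟨f, u, hfE, hfB⟩ :=
    geometric_hahn_banach_open hEconv hEopen (hDconv.prod (convex_Iic M)) hdisj
  set ℓ := f.comp (ContinuousLinearMap.inl ℝ Y ℝ)
  set s := f (0, 1)
  have hf : ∀ y t, f (y, t) = ℓ y + t * s := fun y t => by
    have hyt : ((y, t) : Y × ℝ) = (y, 0) + t • (0, 1) := by simp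
    rw [hyt, map_add, map_smul, smul_eq_mul]
    rfl
  have hfE' : ∀ y t, G y < t → ℓ y + t * s < u := fun y t h => hf y t ▸ hfE (y, t) h
  have hfB' : ∀ y ∈ D, u ≤ ℓ y + M * s := fun y hy => hf y M ▸ hfB (y, M) ⟨hy, mem_Iic.mpr le_rfl⟩
  -- the hyperplane is not vertical: it separates `(d, G d + 1)` from `(d, M)`
  have hs : s < 0 := by
    have h₁ := hfE' d (G d + 1) (by linarith)
    have h₂ := hfB' d hd
    nlinarith [hM d hd]
  have hpos : 0 < -s := neg_pos.mpr hs
  have hwc : ∀ y, ((-s)⁻¹ • ℓ) y + -((-s)⁻¹ * u) = (ℓ y - u) / -s := fun y => by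
    simp only [smul_apply, smul_eq_mul]
    ring
  refine ⟨(-s)⁻¹ • ℓ, -((-s)⁻¹ * u), fun y => ?_, fun y hy => ?_⟩
  · refine le_of_forall_gt fun t ht => ?_
    rw [hwc, div_lt_iff₀ hpos]
    linarith [hfE' y t ht]
  · rw [hwc, le_div_iff₀ hpos]
    linarith [hfB' y hy]

section Indicator

variable {X : Type*} {K : Set X} {F : X → EReal}

theorem sSup_coe_sub_indicator (hF : ∀ φ, F φ = if φ ∈ K then (0 : EReal) else (⊤ : EReal))
    (h : X → ℝ) :
    sSup {r : EReal | ∃ φ, r = (h φ : EReal) - F φ} = ⨆ φ ∈ K, (h φ : EReal) := by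
  refine le_antisymm (sSup_le ?_) (iSup₂_le fun φ hφ => le_sSup ⟨φ, by simp [hF, hφ]⟩)
  rintro _ ⟨φ, rfl⟩
  by_cases hφ : φ ∈ K
  · simpa [hF, hφ] using le_iSup₂ (f := fun φ (_ : φ ∈ K) => (h φ : EReal)) φ hφ
  · simp [hF, hφ]

theorem sSup_neg_indicator_sub (hF : ∀ φ, F φ = if φ ∈ K then (0 : EReal) else (⊤ : EReal))
    (g : X → ℝ) :
    sSup {r : EReal | ∃ φ, r = -F φ - (g φ : EReal)} = ⨆ φ ∈ K, ((-g φ : ℝ) : EReal) := by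
  rw [← sSup_coe_sub_indicator hF]
  simp only [EReal.coe_neg, sub_eq_add_neg, add_comm]

end Indicator

theorem sSup_coe_sub_coe_eq_iSup {ι : Type*} (f g : ι → ℝ) :
    sSup {r : EReal | ∃ i, r = (f i : EReal) - (g i : EReal)} = ⨆ i, ((f i - g i : ℝ) : EReal) := by
  rw [← sSup_range]
  congr 1
  ext r
  simp [eq_comm]

section IndicatorDuality

variable {X Y : Type*} [NormedAddCommGroup X] [NormedSpace ℝ X]
  [NormedAddCommGroup Y] [NormedSpace ℝ Y]

theorem iSup_neg_comp_le_support_add_conj (A : X →L[ℝ] Y) (K : Set X) (G : Y → ℝ)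
    (w : StrongDual ℝ Y) :
    ⨆ φ ∈ K, ((-G (A φ) : ℝ) : EReal)
      ≤ (⨆ φ ∈ K, ((w.comp A φ : ℝ) : EReal)) + ⨆ y, (((-w) y - G y : ℝ) : EReal) := by
  refine iSup₂_le fun φ hφ => ?_
  calc ((-G (A φ) : ℝ) : EReal)
      = ((w.comp A φ : ℝ) : EReal) + (((-w) (A φ) - G (A φ) : ℝ) : EReal) := by
        rw [← EReal.coe_add, ContinuousLinearMap.comp_apply, neg_apply]
        ring_nf
    _ ≤ _ := add_le_add (le_iSup₂ (f := fun φ (_ : φ ∈ K) => ((w.comp A φ : ℝ) : EReal)) φ hφ)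
        (le_iSup (fun y => (((-w) y - G y : ℝ) : EReal)) (A φ))

theorem exists_support_add_conj_le_iSup_neg_comp (A : X →L[ℝ] Y) {K : Set X} (hKne : K.Nonempty)
    (hKconv : Convex ℝ K) {G : Y → ℝ} (hGcont : Continuous G) (hGconv : ConvexOn ℝ univ G)
    (hfin : ⨆ φ ∈ K, ((-G (A φ) : ℝ) : EReal) ≠ ⊤) :
    ∃ w : StrongDual ℝ Y, (⨆ φ ∈ K, ((w.comp A φ : ℝ) : EReal)) + ⨆ y, (((-w) y - G y : ℝ) : EReal)
      ≤ ⨆ φ ∈ K, ((-G (A φ) : ℝ) : EReal) := by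
  have hle : ∀ φ ∈ K, ((-G (A φ) : ℝ) : EReal) ≤ ⨆ φ ∈ K, ((-G (A φ) : ℝ) : EReal) :=
    fun φ hφ => le_iSup₂ (f := fun φ (_ : φ ∈ K) => ((-G (A φ) : ℝ) : EReal)) φ hφ
  have hbot : ⨆ φ ∈ K, ((-G (A φ) : ℝ) : EReal) ≠ ⊥ :=
    ne_bot_of_le_ne_bot (by simp) (hle _ hKne.some_mem)
  generalize hS : ⨆ φ ∈ K, ((-G (A φ) : ℝ) : EReal) = S at hle hfin hbot ⊢
  lift S to ℝ using ⟨hfin, hbot⟩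
  obtain ⟨w, c, hminor, hgeK⟩ := hGconv.exists_affine_minorant_ge_on hGcont
    (hKne.image A) (hKconv.linear_image (A : X →ₗ[ℝ] Y)) (M := -S)
    (by rintro _ ⟨φ, hφ, rfl⟩; exact neg_le.mp (EReal.coe_le_coe_iff.mp (hle φ hφ)))
  refine ⟨-w, ?_⟩
  have hsupport : ⨆ φ ∈ K, (((-w).comp A φ : ℝ) : EReal) ≤ ((c + S : ℝ) : EReal) :=
    iSup₂_le fun φ hφ => EReal.coe_le_coe_iff.mpr <| by
      simp only [ContinuousLinearMap.comp_apply, neg_apply]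
      linarith [hgeK (A φ) ⟨φ, hφ, rfl⟩]
  have hconj : ⨆ y, (((- -w) y - G y : ℝ) : EReal) ≤ ((-c : ℝ) : EReal) :=
    iSup_le fun y => EReal.coe_le_coe_iff.mpr <| by
      simp only [neg_neg]
      linarith [hminor y]
  calc _ ≤ ((c + S : ℝ) : EReal) + ((-c : ℝ) : EReal) := add_le_add hsupport hconj
    _ = (S : EReal) := by rw [← EReal.coe_add]; ring_nf

end IndicatorDuality

theorem fenchel_rockafellar_duality_general
    {X Y : Type*} [NormedAddCommGroup X] [NormedSpace ℝ X]
    [NormedAddCommGroup Y] [NormedSpace ℝ Y]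
    (A : X →L[ℝ] Y)
    (K : Set X) (hKne : K.Nonempty) (hKconv : Convex ℝ K)
    (G : Y → ℝ) (hGcont : Continuous G) (hGconv : ConvexOn ℝ Set.univ G)
    (F : X → EReal) (hF : ∀ φ, F φ = if φ ∈ K then (0 : EReal) else (⊤ : EReal))
    (Fstar : StrongDual ℝ X → EReal)
    (hFstar : ∀ ξ, Fstar ξ = sSup {r : EReal | ∃ φ : X, r = (ξ φ : EReal) - F φ})
    (Gstar : StrongDual ℝ Y → EReal)
    (hGstar : ∀ w, Gstar w = sSup {r : EReal | ∃ y : Y, r = (w y : EReal) - (G y : EReal)}) :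
    sSup {r : EReal | ∃ φ : X, r = -F φ - (G (A φ) : EReal)}
      = sInf {r : EReal | ∃ w : StrongDual ℝ Y, r = Fstar (w.comp A) + Gstar (-w)} ∧
    (sSup {r : EReal | ∃ φ : X, r = -F φ - (G (A φ) : EReal)} ≠ ⊥ →
     sSup {r : EReal | ∃ φ : X, r = -F φ - (G (A φ) : EReal)} ≠ ⊤ →
     ∃ w : StrongDual ℝ Y, Fstar (w.comp A) + Gstar (-w)
        = sSup {r : EReal | ∃ φ : X, r = -F φ - (G (A φ) : EReal)}) := by
  have hdual : ∀ w : StrongDual ℝ Y, Fstar (w.comp A) + Gstar (-w)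
      = (⨆ φ ∈ K, ((w.comp A φ : ℝ) : EReal)) + ⨆ y, (((-w) y - G y : ℝ) : EReal) := fun w => by
    rw [hFstar, hGstar, sSup_coe_sub_indicator hF, sSup_coe_sub_coe_eq_iSup]
  rw [sSup_neg_indicator_sub hF]
  obtain ⟨hinf, hattain⟩ := eq_sInf_of_forall_le_of_exists_le
    (d := fun w : StrongDual ℝ Y => Fstar (w.comp A) + Gstar (-w))
    (fun w => hdual w ▸ iSup_neg_comp_le_support_add_conj A K G w)
    (fun hfin => (exists_support_add_conj_le_iSup_neg_comp A hKne hKconv hGcont hGconv hfin).imp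
      fun w hw => (hdual w).symm ▸ hw)
  exact ⟨hinf, fun _ => hattain⟩

/-- Rockafellar–Fenchel strong duality: for a bounded linear operator `A`, the
indicator `F` of a nonempty closed convex set and a continuous convex `G`,
`sup (-F - G∘A) = min (F*(A*·) + G*(-·))`, the dual minimum being attained
whenever the common value is finite. -/
theorem fenchel_rockafellar_duality
    {X Y : Type*} [NormedAddCommGroup X] [NormedSpace ℝ X]
    [NormedAddCommGroup Y] [NormedSpace ℝ Y]
    (A : X →L[ℝ] Y)
    (K : Set X) (hKne : K.Nonempty) (hKcl : IsClosed K) (hKconv : Convex ℝ K)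
    (G : Y → ℝ) (hGcont : Continuous G) (hGconv : ConvexOn ℝ Set.univ G)
    (F : X → EReal) (hF : ∀ φ, F φ = if φ ∈ K then (0 : EReal) else (⊤ : EReal))
    (Fstar : StrongDual ℝ X → EReal)
    (hFstar : ∀ ξ, Fstar ξ = sSup {r : EReal | ∃ φ : X, r = (ξ φ : EReal) - F φ})
    (Gstar : StrongDual ℝ Y → EReal)
    (hGstar : ∀ w, Gstar w = sSup {r : EReal | ∃ y : Y, r = (w y : EReal) - (G y : EReal)}) :
    sSup {r : EReal | ∃ φ : X, r = -F φ - (G (A φ) : EReal)}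
      = sInf {r : EReal | ∃ w : StrongDual ℝ Y, r = Fstar (w.comp A) + Gstar (-w)} ∧
    (sSup {r : EReal | ∃ φ : X, r = -F φ - (G (A φ) : EReal)} ≠ ⊥ →
     sSup {r : EReal | ∃ φ : X, r = -F φ - (G (A φ) : EReal)} ≠ ⊤ →
     ∃ w : StrongDual ℝ Y, Fstar (w.comp A) + Gstar (-w)
        = sSup {r : EReal | ∃ φ : X, r = -F φ - (G (A φ) : EReal)}) :=
  fenchel_rockafellar_duality_general A K hKne hKconv G hGcont hGconv F hF Fstar hFstar Gstar hGstar
end
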